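/- arXiv:math/0303097 — 6 statements merged into one kernel-verified Lean document; each statement's English description precedes it below -/
import Mathlib

section
/- If R is von Neumann regular, then every finitely presented R-module is projective. -/
section Aux

variable {R : Type} [Ring R]

/-- Key ring-theoretic lemma: over a von Neumann regular ring, for any finite family
`x i` there exist `y i` such that `u = ∑ x i * y i` satisfies `u * x j = x j` for all `j`. -/
lemma vnr_key (hreg : ∀ x : R, ∃ y : R, x * y * x = x) {ι : Type} (x : ι → R) (s : Finset ι) :
    ∃ y : ι → R, ∀ j ∈ s, (∑ i ∈ s, x i * y i) * x j = x j := by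
  classical
  induction s using Finset.induction_on with
  | empty => exact ⟨0, fun j hj => absurd hj (Finset.notMem_empty j)⟩
  | @insert a s ha ih =>
    obtain ⟨y', hu⟩ := ih
    set u := ∑ i ∈ s, x i * y' i with hu_def
    have huu : u * u = u := by
      calc u * u = ∑ i ∈ s, u * (x i * y' i) := Finset.mul_sum _ _ _
        _ = ∑ i ∈ s, x i * y' i := Finset.sum_congr rfl fun i hi => by
              rw [← mul_assoc, hu i hi]
        _ = u := rfl
    set A := x a with hA_def
    obtain ⟨w, hw⟩ := hreg (A - u * A)
    set z := A - u * A with hz_def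
    set c := w - w * u with hc_def
    have hcA : c * A = w * z := by
      rw [hc_def, hz_def, sub_mul, mul_sub, mul_assoc]
    refine ⟨fun i => if i = a then c else y' i - y' i * (A * c), fun j hj => ?_⟩
    have hsum : (∑ i ∈ insert a s, x i * (if i = a then c else y' i - y' i * (A * c)))
        = u + z * c := by
      rw [Finset.sum_insert ha, if_pos rfl]
      have h1 : ∑ i ∈ s, x i * (if i = a then c else y' i - y' i * (A * c))
          = u - u * (A * c) := by
        rw [Finset.sum_congr rfl (fun i hi => by
          rw [if_neg (by rintro rfl; exact ha hi)])]
        have : ∀ i ∈ s, x i * (y' i - y' i * (A * c))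
            = x i * y' i - (x i * y' i) * (A * c) := fun i _ => by
          rw [mul_sub, mul_assoc]
        rw [Finset.sum_congr rfl this, Finset.sum_sub_distrib, ← Finset.sum_mul, ← hu_def]
      rw [h1, hz_def]
      noncomm_ring
    rw [hsum]
    rcases Finset.mem_insert.1 hj with rfl | hj'
    · have h1 : z * (c * A) = z := by rw [hcA, ← mul_assoc, hw]
      calc (u + z * c) * x j = u * A + z * (c * A) := by rw [add_mul, mul_assoc]
        _ = u * A + z := by rw [h1]
        _ = x j := by rw [hz_def]; abel
    · have hcx : c * x j = 0 := by
        rw [hc_def, sub_mul, mul_assoc, hu j hj', sub_self]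
      rw [add_mul, mul_assoc, hcx, mul_zero, add_zero, hu j hj']

/-- A cyclic submodule of a free module over a von Neumann regular ring is the image of
an idempotent endomorphism. -/
lemma vnr_cyclic (hreg : ∀ x : R, ∃ y : R, x * y * x = x) {ι : Type} (x : ι →₀ R) :
    ∃ e : (ι →₀ R) →ₗ[R] (ι →₀ R), e ∘ₗ e = e ∧
      LinearMap.range e = Submodule.span R {x} := by
  classical
  obtain ⟨y, hy⟩ := vnr_key hreg (fun i => x i) x.support
  set u := ∑ i ∈ x.support, x i * y i with hu_def
  have hux : ∀ j, u * x j = x j := by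
    intro j
    by_cases hj : j ∈ x.support
    · exact hy j hj
    · rw [Finsupp.notMem_support_iff.1 hj, mul_zero]
  set lam : (ι →₀ R) →ₗ[R] R := Finsupp.linearCombination R y with hlam_def
  have hlx : lam x = u := by
    rw [hlam_def, hu_def]
    simp [Finsupp.linearCombination_apply, Finsupp.sum, smul_eq_mul]
  have hfix : lam x • x = x := by
    ext j
    rw [Finsupp.smul_apply, hlx, smul_eq_mul, hux]
  refine ⟨{ toFun := fun z => lam z • x,
            map_add' := fun a b => by rw [map_add, add_smul],
            map_smul' := fun r a => by
              rw [map_smul, smul_eq_mul, mul_smul, RingHom.id_apply] }, ?_, ?_⟩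
  · apply LinearMap.ext; intro z
    simp only [LinearMap.comp_apply, LinearMap.coe_mk, AddHom.coe_mk]
    rw [map_smul, smul_eq_mul, mul_smul, hfix]
  · apply le_antisymm
    · rintro _ ⟨z, rfl⟩
      exact Submodule.mem_span_singleton.2 ⟨lam z, rfl⟩
    · rw [Submodule.span_le, Set.singleton_subset_iff]
      exact ⟨x, hfix⟩

/-- A finitely generated submodule of a free module over a von Neumann regular ring is
the image of an idempotent endomorphism. -/
lemma vnr_fg_summand (hreg : ∀ x : R, ∃ y : R, x * y * x = x) {ι : Type}
    (s : Finset (ι →₀ R)) :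
    ∃ e : (ι →₀ R) →ₗ[R] (ι →₀ R), e ∘ₗ e = e ∧
      LinearMap.range e = Submodule.span R (s : Set (ι →₀ R)) := by
  classical
  induction s using Finset.induction_on with
  | empty =>
    refine ⟨0, by ext z; simp, ?_⟩
    simp
  | @insert v s hv ih =>
    obtain ⟨e, he, hre⟩ := ih
    have efix : ∀ z, e (e z) = e z := fun z => by
      have := DFunLike.congr_fun he z; simpa using this
    have hrangefix : ∀ z ∈ LinearMap.range e, e z = z := by
      rintro _ ⟨t, rfl⟩; exact efix t
    set c := v - e v with hc
    have hec : e c = 0 := by rw [hc, map_sub, efix, sub_self]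
    obtain ⟨g, hg, hrg⟩ := vnr_cyclic hreg c
    have gfix : ∀ z, g (g z) = g z := fun z => by
      have := DFunLike.congr_fun hg z; simpa using this
    have hgc : g c = c := by
      have hcm : c ∈ LinearMap.range g := hrg ▸ Submodule.mem_span_singleton_self c
      obtain ⟨t, ht⟩ := hcm
      rw [← ht]; exact gfix t
    have heg : ∀ z, e (g z) = 0 := by
      intro z
      have : g z ∈ Submodule.span R {c} := hrg ▸ LinearMap.mem_range_self g z
      obtain ⟨r, hr⟩ := Submodule.mem_span_singleton.1 this
      rw [← hr, map_smul, hec, smul_zero]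
    refine ⟨e + g ∘ₗ (LinearMap.id - e), ?_, ?_⟩
    · apply LinearMap.ext; intro z
      simp only [LinearMap.comp_apply, LinearMap.add_apply, LinearMap.sub_apply,
        LinearMap.id_apply]
      have h1 : e (e z + g (z - e z)) = e z := by
        rw [map_add, efix, heg, add_zero]
      rw [h1, add_sub_cancel_left, gfix]
    · have hcmem : c ∈ Submodule.span R (↑(insert v s) : Set (ι →₀ R)) := by
        rw [hc, Finset.coe_insert]
        refine sub_mem (Submodule.subset_span (Set.mem_insert v _)) ?_
        have : e v ∈ LinearMap.range e := LinearMap.mem_range_self e v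
        rw [hre] at this
        exact Submodule.span_mono (Set.subset_insert v _) this
      apply le_antisymm
      · rintro _ ⟨z, rfl⟩
        simp only [LinearMap.add_apply, LinearMap.comp_apply, LinearMap.sub_apply,
          LinearMap.id_apply]
        apply Submodule.add_mem
        · have : e z ∈ LinearMap.range e := LinearMap.mem_range_self e z
          rw [hre] at this
          rw [Finset.coe_insert]
          exact Submodule.span_mono (Set.subset_insert v _) this
        · have : g (z - e z) ∈ Submodule.span R {c} :=
            hrg ▸ LinearMap.mem_range_self g _
          obtain ⟨r, hr⟩ := Submodule.mem_span_singleton.1 this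
          rw [← hr]
          exact Submodule.smul_mem _ r hcmem
      · rw [Submodule.span_le]
        intro w hw
        rw [Finset.coe_insert, Set.mem_insert_iff] at hw
        rcases hw with rfl | hw
        · refine ⟨w, ?_⟩
          simp only [LinearMap.add_apply, LinearMap.comp_apply, LinearMap.sub_apply,
            LinearMap.id_apply]
          rw [← hc, hgc, hc]
          abel
        · have hwr : w ∈ LinearMap.range e := hre ▸ Submodule.subset_span hw
          refine ⟨w, ?_⟩
          simp only [LinearMap.add_apply, LinearMap.comp_apply, LinearMap.sub_apply,
            LinearMap.id_apply]
          rw [hrangefix w hwr, sub_self, map_zero, add_zero]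

end Aux

/-- If `R` is von Neumann regular, then every finitely presented `R`-module is projective. -/
theorem finitePresentation_projective_of_vonNeumannRegular (R : Type) [Ring R]
    (hreg : ∀ x : R, ∃ y : R, x * y * x = x)
    (M : Type) [AddCommGroup M] [Module R M]
    (hM : Module.FinitePresentation R M) : Module.Projective R M := by
  classical
  obtain ⟨s, hs, hker⟩ := hM
  set π := Finsupp.linearCombination R ((↑) : s → M) with hπ_def
  have hsur : Function.Surjective π := by
    rw [← LinearMap.range_eq_top]
    simpa only [hπ_def, Finsupp.range_linearCombination, Subtype.range_coe_subtype,
      Finset.setOf_mem] using hs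
  obtain ⟨t, ht⟩ := hker
  obtain ⟨e, he, hre⟩ := vnr_fg_summand hreg t
  rw [ht] at hre
  have efix : ∀ z, e (e z) = e z := fun z => by
    have := DFunLike.congr_fun he z; simpa using this
  have hkerle : LinearMap.ker π ≤ LinearMap.ker (LinearMap.id - e) := by
    intro z hz
    rw [← hre] at hz
    obtain ⟨tz, rfl⟩ := hz
    simp only [LinearMap.mem_ker, LinearMap.sub_apply, LinearMap.id_apply, efix, sub_self]
  set sbar : ((s →₀ R) ⧸ LinearMap.ker π) →ₗ[R] (s →₀ R) :=
    Submodule.liftQ _ (LinearMap.id - e) hkerle with hsbar_def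
  set φ := π.quotKerEquivOfSurjective hsur with hφ_def
  have key2 : ∀ q, π (sbar q) = φ q := by
    intro q
    obtain ⟨z, rfl⟩ := Submodule.Quotient.mk_surjective _ q
    have h1 : sbar (Submodule.Quotient.mk z) = z - e z := by
      rw [hsbar_def, Submodule.liftQ_apply, LinearMap.sub_apply, LinearMap.id_apply]
    have h2 : φ (Submodule.Quotient.mk z) = π z := rfl
    have h3 : π (e z) = 0 := by
      have : e z ∈ LinearMap.ker π := hre ▸ LinearMap.mem_range_self e z
      exact this
    rw [h1, h2, map_sub, h3, sub_zero]
  apply Module.Projective.of_split (sbar ∘ₗ φ.symm.toLinearMap) π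
  apply LinearMap.ext; intro m
  simp only [LinearMap.comp_apply, LinearMap.id_apply, LinearEquiv.coe_toLinearMap]
  rw [key2, LinearEquiv.apply_symm_apply]
end

section
/- In the complex group ring of the free group on two generators x, y, the map CΓ² → CΓ given by (a,b) ↦ (x−1)a + (y−1)b is injective. -/
open FreeGroup

private lemma reduce_cons_eq {p : Bool × Bool} {w : List (Bool × Bool)}
    (hw : FreeGroup.reduce w = w) (h : ∀ t, w ≠ (p.1, !p.2) :: t) :
    FreeGroup.reduce (p :: w) = p :: w := by
  rw [FreeGroup.reduce.cons, hw]
  cases w with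
  | nil => rfl
  | cons q t =>
    simp only
    rw [if_neg]
    rintro ⟨h1, h2⟩
    exact h t (by
      obtain ⟨q1, q2⟩ := q
      simp only at h1 h2
      subst h1
      have : q2 = !p.2 := by
        cases p.2 <;> cases q2 <;> simp_all
      rw [this])

private lemma toWord_cons_mul {p : Bool × Bool} (g : FreeGroup Bool)
    (h : ∀ t, g.toWord ≠ (p.1, !p.2) :: t) :
    (FreeGroup.mk [p] * g).toWord = p :: g.toWord := by
  conv_lhs => rw [← FreeGroup.mk_toWord (x := g)]
  rw [FreeGroup.mul_mk, FreeGroup.toWord_mk]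
  exact reduce_cons_eq (FreeGroup.reduce_toWord g) h

private lemma of_eq_mk (t : Bool) : FreeGroup.of t = FreeGroup.mk [(t, true)] := rfl

private lemma of_inv_eq_mk (t : Bool) : (FreeGroup.of t)⁻¹ = FreeGroup.mk [(t, false)] := by
  rw [of_eq_mk, FreeGroup.inv_mk]
  rfl

private lemma main_zero (a b : MonoidAlgebra ℂ (FreeGroup Bool))
    (h : (MonoidAlgebra.of ℂ (FreeGroup Bool) (FreeGroup.of true) - 1) * a +
        (MonoidAlgebra.of ℂ (FreeGroup Bool) (FreeGroup.of false) - 1) * b = 0) :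
    a = 0 ∧ b = 0 := by
  by_contra hc
  have hS : (a.coeff.support ∪ b.coeff.support).Nonempty := by
    rcases not_and_or.mp hc with h' | h'
    · obtain ⟨g, hg⟩ := Finsupp.ne_iff.mp (mt MonoidAlgebra.coeff_eq_zero.mp h')
      exact ⟨g, Finset.mem_union_left _ (Finsupp.mem_support_iff.mpr (by simpa using hg))⟩
    · obtain ⟨g, hg⟩ := Finsupp.ne_iff.mp (mt MonoidAlgebra.coeff_eq_zero.mp h')
      exact ⟨g, Finset.mem_union_right _ (Finsupp.mem_support_iff.mpr (by simpa using hg))⟩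
  obtain ⟨g, hgS, hgmax⟩ :=
    Finset.exists_max_image (a.coeff.support ∪ b.coeff.support) (fun u => u.toWord.length) hS
  set N := g.toWord.length with hN
  -- elements longer than N are outside both supports
  have hza : ∀ u : FreeGroup Bool, N < u.toWord.length → a.coeff u = 0 := by
    intro u hu
    by_contra h'
    exact absurd (hgmax u (Finset.mem_union_left _ (Finsupp.mem_support_iff.mpr h')))
      (by omega)
  have hzb : ∀ u : FreeGroup Bool, N < u.toWord.length → b.coeff u = 0 := by
    intro u hu
    by_contra h'
    exact absurd (hgmax u (Finset.mem_union_right _ (Finsupp.mem_support_iff.mpr h')))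
      (by omega)
  -- coefficient equation
  have E : ∀ w : FreeGroup Bool,
      a.coeff ((FreeGroup.of true)⁻¹ * w) + b.coeff ((FreeGroup.of false)⁻¹ * w) = a.coeff w + b.coeff w := by
    intro w
    have := congrArg (fun x => x.coeff w) h
    simp only [sub_mul, one_mul, MonoidAlgebra.of_apply] at this
    rw [MonoidAlgebra.coeff_add, MonoidAlgebra.coeff_sub, MonoidAlgebra.coeff_sub,
      Finsupp.add_apply, Finsupp.sub_apply, Finsupp.sub_apply,
      MonoidAlgebra.coeff_single_mul_apply, MonoidAlgebra.coeff_single_mul_apply] at this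
    simp only [one_mul, MonoidAlgebra.coeff_zero, Finsupp.coe_zero, Pi.zero_apply] at this
    linear_combination this
  have claimA : (∀ t, g.toWord ≠ (true, false) :: t) → a.coeff g = 0 := by
    intro hhead
    have hw : (FreeGroup.of true * g).toWord = (true, true) :: g.toWord := by
      rw [of_eq_mk]
      exact toWord_cons_mul g (by simpa using hhead)
    have h1 : (FreeGroup.of true)⁻¹ * (FreeGroup.of true * g) = g :=
      inv_mul_cancel_left _ _
    have h2 : N < (FreeGroup.of true * g).toWord.length := by
      rw [hw]; simp [hN]
    have h3 : ((FreeGroup.of false)⁻¹ * (FreeGroup.of true * g)).toWord =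
        (false, false) :: (true, true) :: g.toWord := by
      rw [of_inv_eq_mk]
      rw [toWord_cons_mul (FreeGroup.of true * g) (by rw [hw]; simp), hw]
    have h4 : N < ((FreeGroup.of false)⁻¹ * (FreeGroup.of true * g)).toWord.length := by
      rw [h3]; simp [hN]
    have hE := E (FreeGroup.of true * g)
    rw [h1, hza _ h2, hzb _ h2, hzb _ h4] at hE
    linear_combination hE
  have claimB : (∀ t, g.toWord ≠ (false, false) :: t) → b.coeff g = 0 := by
    intro hhead
    have hw : (FreeGroup.of false * g).toWord = (false, true) :: g.toWord := by
      rw [of_eq_mk]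
      exact toWord_cons_mul g (by simpa using hhead)
    have h1 : (FreeGroup.of false)⁻¹ * (FreeGroup.of false * g) = g :=
      inv_mul_cancel_left _ _
    have h2 : N < (FreeGroup.of false * g).toWord.length := by
      rw [hw]; simp [hN]
    have h3 : ((FreeGroup.of true)⁻¹ * (FreeGroup.of false * g)).toWord =
        (true, false) :: (false, true) :: g.toWord := by
      rw [of_inv_eq_mk]
      rw [toWord_cons_mul (FreeGroup.of false * g) (by rw [hw]; simp), hw]
    have h4 : N < ((FreeGroup.of true)⁻¹ * (FreeGroup.of false * g)).toWord.length := by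
      rw [h3]; simp [hN]
    have hE := E (FreeGroup.of false * g)
    rw [h1, hza _ h4, hzb _ h2, hza _ h2] at hE
    linear_combination hE
  -- elements whose reduced word starts with an inverse letter
  have claimC : ∀ c : Bool, ∀ t, g.toWord = (c, false) :: t → a.coeff g + b.coeff g = 0 := by
    intro c t ht
    have h3 : ((FreeGroup.of true)⁻¹ * g).toWord = (true, false) :: g.toWord := by
      rw [of_inv_eq_mk]
      exact toWord_cons_mul g (by rw [ht]; simp)
    have h4 : ((FreeGroup.of false)⁻¹ * g).toWord = (false, false) :: g.toWord := by
      rw [of_inv_eq_mk]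
      exact toWord_cons_mul g (by rw [ht]; simp)
    have hE := E g
    rw [hza _ (by rw [h3]; simp [hN]), hzb _ (by rw [h4]; simp [hN])] at hE
    linear_combination -hE
  have hag : a.coeff g = 0 ∧ b.coeff g = 0 := by
    rcases hw : g.toWord with _ | ⟨⟨c, d⟩, t⟩
    · exact ⟨claimA (by rw [hw]; simp), claimB (by rw [hw]; simp)⟩
    · cases d with
      | true => exact ⟨claimA (by rw [hw]; simp), claimB (by rw [hw]; simp)⟩
      | false =>
        cases c with
        | true =>
          have hb : b.coeff g = 0 := claimB (by rw [hw]; simp)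
          have := claimC true t hw
          exact ⟨by linear_combination this - hb, hb⟩
        | false =>
          have ha : a.coeff g = 0 := claimA (by rw [hw]; simp)
          have := claimC false t hw
          exact ⟨ha, by linear_combination this - ha⟩
  rcases Finset.mem_union.mp hgS with hmem | hmem
  · exact Finsupp.mem_support_iff.mp hmem hag.1
  · exact Finsupp.mem_support_iff.mp hmem hag.2

/-- In the complex group ring of the free group on two generators `x, y`, the map
`CΓ² → CΓ`, `(a, b) ↦ (x-1)a + (y-1)b`, is injective. -/
theorem freeGroup_groupRing_injective :
    Function.Injective
      (fun p : MonoidAlgebra ℂ (FreeGroup Bool) × MonoidAlgebra ℂ (FreeGroup Bool) =>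
        (MonoidAlgebra.of ℂ (FreeGroup Bool) (FreeGroup.of true) - 1) * p.1 +
          (MonoidAlgebra.of ℂ (FreeGroup Bool) (FreeGroup.of false) - 1) * p.2) := by
  intro p q hpq
  simp only at hpq
  have h0 : (MonoidAlgebra.of ℂ (FreeGroup Bool) (FreeGroup.of true) - 1) * (p.1 - q.1) +
      (MonoidAlgebra.of ℂ (FreeGroup Bool) (FreeGroup.of false) - 1) * (p.2 - q.2) = 0 := by
    rw [mul_sub, mul_sub]
    rw [sub_add_sub_comm, hpq, sub_self]
  obtain ⟨h1, h2⟩ := main_zero _ _ h0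
  exact Prod.ext (sub_eq_zero.mp h1) (sub_eq_zero.mp h2)
end

section
/- The complex group ring of the free group on two generators does not satisfy the right Ore condition with respect to its set of non-zerodivisors. -/
noncomputable section OreAux

open MonoidAlgebra

abbrev RR := MonoidAlgebra ℂ (FreeGroup Bool)

def oof : FreeGroup Bool →* RR := MonoidAlgebra.of ℂ (FreeGroup Bool)

lemma oof_mul_inv (g : FreeGroup Bool) : oof g * oof g⁻¹ = 1 := by
  rw [← map_mul, mul_inv_cancel, map_one]

lemma oof_inv_mul (g : FreeGroup Bool) : oof g⁻¹ * oof g = 1 := by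
  rw [← map_mul, inv_mul_cancel, map_one]

/-- Unit matrix `[[g,0],[m,1]]`. -/
def mkU (g : FreeGroup Bool) (m : RR) : (Matrix (Fin 2) (Fin 2) RR)ˣ where
  val := !![oof g, 0; m, 1]
  inv := !![oof g⁻¹, 0; -(m * oof g⁻¹), 1]
  val_inv := by
    ext i j
    fin_cases i <;> fin_cases j <;>
      simp [Matrix.mul_apply, Fin.sum_univ_two, oof_mul_inv]
  inv_val := by
    ext i j
    fin_cases i <;> fin_cases j <;>
      simp [Matrix.mul_apply, Fin.sum_univ_two, oof_inv_mul, mul_assoc]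

/-- Unit matrix `[[g,m],[0,1]]`. -/
def mkV (g : FreeGroup Bool) (m : RR) : (Matrix (Fin 2) (Fin 2) RR)ˣ where
  val := !![oof g, m; 0, 1]
  inv := !![oof g⁻¹, -(oof g⁻¹ * m); 0, 1]
  val_inv := by
    ext i j
    fin_cases i <;> fin_cases j <;>
      simp [Matrix.mul_apply, Fin.sum_univ_two, oof_mul_inv, ← mul_assoc]
  inv_val := by
    ext i j
    fin_cases i <;> fin_cases j <;>
      simp [Matrix.mul_apply, Fin.sum_univ_two, oof_inv_mul]

def Phi (c₀ : Bool) : FreeGroup Bool →* (Matrix (Fin 2) (Fin 2) RR)ˣ :=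
  FreeGroup.lift (fun c => mkU (FreeGroup.of c) (if c = c₀ then 1 else 0))

def Psi (c₀ : Bool) : FreeGroup Bool →* (Matrix (Fin 2) (Fin 2) RR)ˣ :=
  FreeGroup.lift (fun c => mkV (FreeGroup.of c) (if c = c₀ then 1 else 0))

lemma Phi_shape (c₀ : Bool) (g : FreeGroup Bool) :
    (Phi c₀ g).val 0 0 = oof g ∧
    (Phi c₀ g).val 0 1 = 0 ∧
    (Phi c₀ g).val 1 1 = 1 := by
  induction g using FreeGroup.induction_on with
  | C1 => simp [Matrix.one_apply]
  | of c =>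
    have hc : Phi c₀ (FreeGroup.of c) = mkU (FreeGroup.of c) (if c = c₀ then 1 else 0) := FreeGroup.lift_apply_of
    rw [hc]; simp [mkU]
  | inv_of c _ =>
    have h : Phi c₀ (FreeGroup.of c)⁻¹ = (mkU (FreeGroup.of c) (if c = c₀ then 1 else 0))⁻¹ := by
      rw [map_inv]
      have hc : Phi c₀ (FreeGroup.of c) = mkU (FreeGroup.of c) (if c = c₀ then 1 else 0) := FreeGroup.lift_apply_of
      rw [hc]
    rw [h]
    simp [mkU, Units.inv_mk]
  | mul u v hu hv =>
    obtain ⟨h1, h2, h3⟩ := hu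
    obtain ⟨k1, k2, k3⟩ := hv
    rw [map_mul, Units.val_mul]
    refine ⟨?_, ?_, ?_⟩ <;>
      simp [Matrix.mul_apply, Fin.sum_univ_two, h1, h2, h3, k1, k2, k3, map_mul]

lemma Psi_shape (c₀ : Bool) (g : FreeGroup Bool) :
    (Psi c₀ g).val 0 0 = oof g ∧
    (Psi c₀ g).val 1 0 = 0 ∧
    (Psi c₀ g).val 1 1 = 1 := by
  induction g using FreeGroup.induction_on with
  | C1 => simp [Matrix.one_apply]
  | of c =>
    have hc : Psi c₀ (FreeGroup.of c) = mkV (FreeGroup.of c) (if c = c₀ then 1 else 0) := FreeGroup.lift_apply_of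
    rw [hc]; simp [mkV]
  | inv_of c _ =>
    have h : Psi c₀ (FreeGroup.of c)⁻¹ = (mkV (FreeGroup.of c) (if c = c₀ then 1 else 0))⁻¹ := by
      rw [map_inv]
      have hc : Psi c₀ (FreeGroup.of c) = mkV (FreeGroup.of c) (if c = c₀ then 1 else 0) := FreeGroup.lift_apply_of
      rw [hc]
    rw [h]
    simp [mkV, Units.inv_mk]
  | mul u v hu hv =>
    obtain ⟨h1, h2, h3⟩ := hu
    obtain ⟨k1, k2, k3⟩ := hv
    rw [map_mul, Units.val_mul]
    refine ⟨?_, ?_, ?_⟩ <;>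
      simp [Matrix.mul_apply, Fin.sum_univ_two, h1, h2, h3, k1, k2, k3, map_mul]

def dd (c₀ : Bool) (g : FreeGroup Bool) : RR :=
  (Phi c₀ g).val 1 0

def ee (c₀ : Bool) (g : FreeGroup Bool) : RR :=
  (Psi c₀ g).val 0 1

lemma dd_cons (c₀ c : Bool) (g : FreeGroup Bool) :
    dd c₀ (FreeGroup.of c * g) = (if c = c₀ then oof g else 0) + dd c₀ g := by
  obtain ⟨h1, h2, h3⟩ := Phi_shape c₀ g
  have hc : Phi c₀ (FreeGroup.of c) = mkU (FreeGroup.of c) (if c = c₀ then 1 else 0) :=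
    FreeGroup.lift_apply_of
  unfold dd
  rw [map_mul, Units.val_mul, hc]
  by_cases h : c = c₀ <;>
    simp [Matrix.mul_apply, Fin.sum_univ_two, mkU, h1, h]

lemma ee_cons (c₀ c : Bool) (g : FreeGroup Bool) :
    ee c₀ (g * FreeGroup.of c) = (if c = c₀ then oof g else 0) + ee c₀ g := by
  obtain ⟨h1, h2, h3⟩ := Psi_shape c₀ g
  have hc : Psi c₀ (FreeGroup.of c) = mkV (FreeGroup.of c) (if c = c₀ then 1 else 0) :=
    FreeGroup.lift_apply_of
  unfold ee
  rw [map_mul, Units.val_mul, hc]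
  by_cases h : c = c₀ <;>
    simp [Matrix.mul_apply, Fin.sum_univ_two, mkV, h1, h, add_comm]

def PP (c₀ : Bool) (a : RR) : RR := a.coeff.sum fun g z => z • dd c₀ g

def QQ (c₀ : Bool) (a : RR) : RR := a.coeff.sum fun g z => z • ee c₀ g

lemma PP_key (c₀ c : Bool) (a : RR) :
    PP c₀ ((oof (FreeGroup.of c) - 1) * a) = if c = c₀ then a else 0 := by
  induction a using MonoidAlgebra.induction with
  | zero => simp [PP]
  | single_add g z f hg hz ih =>
    rw [mul_add]
    have hadd : ∀ u v : RR, PP c₀ (u + v) = PP c₀ u + PP c₀ v := by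
      intro u v
      exact Finsupp.sum_add_index' (fun g => zero_smul ℂ _) (fun g z w => add_smul z w _)
    rw [hadd, ih]
    have hsingle : (oof (FreeGroup.of c) - 1) * (MonoidAlgebra.single g z : RR)
        = MonoidAlgebra.single (FreeGroup.of c * g) z - MonoidAlgebra.single g z := by
      rw [sub_mul, one_mul]
      congr 1
      show MonoidAlgebra.single (FreeGroup.of c) 1 * MonoidAlgebra.single g z = _
      rw [MonoidAlgebra.single_mul_single, one_mul]
    have hPs : ∀ (h : FreeGroup Bool) (w : ℂ),
        PP c₀ (MonoidAlgebra.single h w) = w • dd c₀ h := by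
      intro h w
      exact Finsupp.sum_single_index (zero_smul ℂ _)
    have hsub : ∀ u v : RR, PP c₀ (u - v) = PP c₀ u - PP c₀ v := fun u v =>
      Finsupp.sum_sub_index (fun a b₁ b₂ => sub_smul b₁ b₂ _)
    rw [hsingle, hsub, hPs, hPs, dd_cons]
    by_cases h : c = c₀ <;>
      simp [h, smul_add, Finsupp.smul_single, MonoidAlgebra.of_apply, oof]
  -- goal after: if-cases

lemma QQ_key (c₀ c : Bool) (a : RR) :
    QQ c₀ (a * (oof (FreeGroup.of c) - 1)) = if c = c₀ then a else 0 := by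
  induction a using MonoidAlgebra.induction with
  | zero => simp [QQ]
  | single_add g z f hg hz ih =>
    rw [add_mul]
    have hadd : ∀ u v : RR, QQ c₀ (u + v) = QQ c₀ u + QQ c₀ v := by
      intro u v
      exact Finsupp.sum_add_index' (fun g => zero_smul ℂ _) (fun g z w => add_smul z w _)
    rw [hadd, ih]
    have hsingle : (MonoidAlgebra.single g z : RR) * (oof (FreeGroup.of c) - 1)
        = MonoidAlgebra.single (g * FreeGroup.of c) z - MonoidAlgebra.single g z := by
      rw [mul_sub, mul_one]
      congr 1
      show MonoidAlgebra.single g z * MonoidAlgebra.single (FreeGroup.of c) 1 = _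
      rw [MonoidAlgebra.single_mul_single, mul_one]
    have hQs : ∀ (h : FreeGroup Bool) (w : ℂ),
        QQ c₀ (MonoidAlgebra.single h w) = w • ee c₀ h := by
      intro h w
      exact Finsupp.sum_single_index (zero_smul ℂ _)
    have hsub : ∀ u v : RR, QQ c₀ (u - v) = QQ c₀ u - QQ c₀ v := fun u v =>
      Finsupp.sum_sub_index (fun a b₁ b₂ => sub_smul b₁ b₂ _)
    rw [hsingle, hsub, hQs, hQs, ee_cons]
    by_cases h : c = c₀ <;>
      simp [h, smul_add, Finsupp.smul_single, MonoidAlgebra.of_apply, oof]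

lemma nzd (c : Bool) : (oof (FreeGroup.of c) - 1) ∈ nonZeroDivisors RR := by
  rw [mem_nonZeroDivisors_iff]
  refine ⟨fun z hz => ?_, fun z hz => ?_⟩
  · have h := PP_key c c z
    rw [hz, if_pos rfl] at h
    simp [PP] at h
    exact h.symm
  have h := QQ_key c c z
  rw [hz, if_pos rfl] at h
  simp [QQ] at h
  exact h.symm

end OreAux

/-- The complex group ring of the free group on two generators does not satisfy the right
Ore condition with respect to its set of non-zerodivisors. -/
theorem freeGroup_groupRing_not_ore :
    ¬ (∀ (a s : MonoidAlgebra ℂ (FreeGroup Bool)),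
        s ∈ nonZeroDivisors (MonoidAlgebra ℂ (FreeGroup Bool)) →
        ∃ (b t : MonoidAlgebra ℂ (FreeGroup Bool)),
          t ∈ nonZeroDivisors (MonoidAlgebra ℂ (FreeGroup Bool)) ∧ a * t = s * b) := by
  intro h
  obtain ⟨b, t, ht, heq⟩ :=
    h (oof (FreeGroup.of true) - 1) (oof (FreeGroup.of false) - 1) (nzd false)
  have h1 : PP true ((oof (FreeGroup.of true) - 1) * t) = t := by
    rw [PP_key]; simp
  have h2 : PP true ((oof (FreeGroup.of false) - 1) * b) = 0 := by
    rw [PP_key]; simp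
  rw [heq, h2] at h1
  rw [mem_nonZeroDivisors_iff] at ht
  have := ht.2 1 (by rw [← h1, mul_zero])
  exact one_ne_zero this
end

section
/- Let R ⊆ S be rings, and suppose the set T of elements of R invertible in S satisfies the right Ore condition in R. Then the canonical map from the Ore localization RT^{-1} to S is injective with image the division closure of R in S; in particular RT^{-1} ≅ D(R ⊆ S). -/
/-!
Since `r /ₒ t` stands for `t⁻¹ r`, any ring map `Φ` from `RT⁻¹` that restricts to the inclusion
`R ⊆ S` sends `r /ₒ t` to `t⁻¹ r` computed in `S`. Hence `Φ` has trivial kernel, and its image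
lies in every division closed subring containing `R`. Conversely the image is itself division
closed: if `t⁻¹ r` is a unit of `S` then so is `r`, so `r ∈ T` and `(t⁻¹ r)⁻¹ = r⁻¹ t` is the
image of `t /ₒ r`. So the image is the least division closed subring containing `R`.
-/

/-- A subring `T` of `S` is division closed if the inverse (in `S`) of any element of `T`
that is invertible in `S` already lies in `T`. -/
def DivisionClosed {S : Type} [Ring S] (T : Subring S) : Prop :=
  ∀ u : Sˣ, (u : S) ∈ T → ((u⁻¹ : Sˣ) : S) ∈ T

/-- The division closure of `R` in `S`: the smallest division closed subring of `S`
containing `R`. -/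
def divisionClosure {S : Type} [Ring S] (R : Subring S) : Subring S :=
  sInf {T : Subring S | R ≤ T ∧ DivisionClosed T}

namespace OreLocalization

section Ring

variable {R : Type*} [Ring R] {T : Submonoid R} [OreSet T] {S : Type*} [Ring S]

theorem map_numeratorHom_mul_map_oreDiv (Φ : OreLocalization T R →+* S) (r : R) (t : T) :
    Φ (numeratorHom (t : R)) * Φ (r /ₒ t) = Φ (numeratorHom r) := by
  rw [← map_mul, numeratorHom_apply, numeratorHom_apply, OreLocalization.mul_cancel]

theorem injective_of_injective_comp_numeratorHom (Φ : OreLocalization T R →+* S)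
    (h : Function.Injective fun r : R => Φ (numeratorHom r)) : Function.Injective Φ := by
  refine (injective_iff_map_eq_zero Φ).mpr fun x hx => ?_
  induction x using OreLocalization.ind with
  | c r t =>
    have hr : Φ (numeratorHom r) = 0 := by rw [← map_numeratorHom_mul_map_oreDiv, hx, mul_zero]
    have h0 : Φ (numeratorHom (0 : R)) = 0 := by rw [numeratorHom_apply, zero_oreDiv', map_zero]
    rw [h (hr.trans h0.symm), zero_oreDiv']

end Ring

section Subring

variable {S : Type} [Ring S] {R : Subring S} {T : Submonoid R} [OreSet T]
  {Φ : OreLocalization T R →+* S}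

theorem map_oreDiv_eq_inv_mul (hΦ : ∀ r : R, Φ (numeratorHom r) = r) (r : R) {t : T} (u : Sˣ)
    (hu : (u : S) = (t : R)) : Φ (r /ₒ t) = ↑u⁻¹ * r := by
  rw [Units.eq_inv_mul_iff_mul_eq, hu, ← hΦ (t : R), ← hΦ r, map_numeratorHom_mul_map_oreDiv]

theorem range_le_of_divisionClosed (hΦ : ∀ r : R, Φ (numeratorHom r) = r)
    (hT : ∀ t : T, IsUnit ((t : R) : S)) {A : Subring S} (hRA : R ≤ A) (hA : DivisionClosed A) :
    Φ.range ≤ A := by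
  rintro _ ⟨x, rfl⟩
  induction x using OreLocalization.ind with
  | c r t =>
    obtain ⟨u, hu⟩ := hT t
    rw [map_oreDiv_eq_inv_mul hΦ r u hu]
    exact A.mul_mem (hA u (hu ▸ hRA (t : R).2)) (hRA r.2)

theorem divisionClosed_range (hΦ : ∀ r : R, Φ (numeratorHom r) = r)
    (hT : ∀ x : R, x ∈ T ↔ IsUnit (x : S)) : DivisionClosed Φ.range := by
  rintro v ⟨x, hx⟩
  induction x using OreLocalization.ind with
  | c r t =>
    obtain ⟨u, hu⟩ := (hT t).mp t.2
    rw [map_oreDiv_eq_inv_mul hΦ r u hu] at hx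
    have hr : (r : S) = ↑(u * v) := by
      rw [Units.val_mul, ← hx, ← mul_assoc, u.mul_inv, one_mul]
    refine ⟨(t : R) /ₒ ⟨r, (hT r).mpr (hr ▸ Units.isUnit _)⟩, ?_⟩
    rw [map_oreDiv_eq_inv_mul hΦ _ (u * v) hr.symm, mul_inv_rev, Units.val_mul, mul_assoc, ← hu,
      u.inv_mul, mul_one]

theorem range_eq_divisionClosure (hΦ : ∀ r : R, Φ (numeratorHom r) = r)
    (hT : ∀ x : R, x ∈ T ↔ IsUnit (x : S)) : Φ.range = divisionClosure R :=
  le_antisymm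
    (le_sInf fun _ hA => range_le_of_divisionClosed hΦ (fun t => (hT t).mp t.2) hA.1 hA.2)
    (sInf_le ⟨fun x hx => ⟨numeratorHom ⟨x, hx⟩, hΦ _⟩, divisionClosed_range hΦ hT⟩)

end Subring

end OreLocalization

/-- Let `R ⊆ S` be rings and let `T` be the set of elements of `R` that become invertible
in `S`; suppose `T` satisfies the (right) Ore condition. Then the canonical map from the
Ore localization `RT⁻¹` to `S` is injective with image the division closure of `R` in `S`;
in particular `RT⁻¹ ≅ D(R ⊆ S)`. -/
theorem oreLocalization_embeds_with_image_divisionClosure (S : Type) [Ring S]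
    (R : Subring S) (T : Submonoid R)
    (hT : ∀ x : R, x ∈ T ↔ IsUnit (x : S))
    [OreLocalization.OreSet T]
    (Φ : OreLocalization T R →+* S)
    (hΦ : ∀ r : R, Φ (OreLocalization.numeratorHom r) = (r : S)) :
    Function.Injective Φ ∧ Set.range Φ = (divisionClosure R : Set S) := by
  refine ⟨OreLocalization.injective_of_injective_comp_numeratorHom Φ ?_, ?_⟩
  · simpa only [hΦ] using Subtype.coe_injective
  · rw [← RingHom.coe_range, OreLocalization.range_eq_divisionClosure hΦ hT]
end

section
/- For a subring R of a ring S, the set { s ∈ S : s is an entry of A^{-1} for some matrix A over R invertible over S } together with R forms the rational closure, and it is a rationally closed subring of S. -/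
section Aux

variable {S : Type} [Ring S]

/-- The candidate carrier: entries of inverses of matrices over `R` invertible over `S`. -/
def Egen (R : Subring S) : Set S :=
  {s : S | ∃ (n : ℕ) (A B : Matrix (Fin n) (Fin n) S),
    (∀ i j, A i j ∈ R) ∧ A * B = 1 ∧ B * A = 1 ∧ ∃ i j, B i j = s}

lemma mem_Egen_of_fintype (R : Subring S) {ι : Type} [Fintype ι] [DecidableEq ι]
    {A B : Matrix ι ι S} (hA : ∀ i j, A i j ∈ R) (h1 : A * B = 1) (h2 : B * A = 1)
    (i j : ι) : B i j ∈ Egen R := by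
  classical
  let e : ι ≃ Fin (Fintype.card ι) := Fintype.equivFin ι
  refine ⟨Fintype.card ι, A.submatrix e.symm e.symm, B.submatrix e.symm e.symm,
    fun i j => hA _ _, ?_, ?_, e i, e j, by simp⟩
  · rw [Matrix.submatrix_mul_equiv, h1, Matrix.submatrix_one_equiv]
  · rw [Matrix.submatrix_mul_equiv, h2, Matrix.submatrix_one_equiv]

/-- Bordering trick: `u ⬝ A⁻¹ ⬝ v + a` is an entry of an inverse. -/
lemma key_mem (R : Subring S) {ι : Type} [Fintype ι] [DecidableEq ι]
    {A B : Matrix ι ι S} (hA : ∀ i j, A i j ∈ R) (h1 : A * B = 1) (h2 : B * A = 1)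
    (u v : ι → S) (hu : ∀ p, u p ∈ R) (hv : ∀ p, v p ∈ R) {a : S} (ha : a ∈ R) :
    (∑ p, ∑ q, u p * B p q * v q) + a ∈ Egen R := by
  classical
  set U : Matrix Unit ι S := Matrix.of (fun _ q => u q) with hU
  set M1 : Matrix (Unit ⊕ ι) (Unit ⊕ ι) S := Matrix.fromBlocks 1 U 0 A with hM1
  set col : Matrix (Unit ⊕ ι) Unit S :=
    Matrix.of (fun p _ => Sum.elim (fun _ => -a) v p) with hcol
  set M1' : Matrix (Unit ⊕ ι) (Unit ⊕ ι) S := Matrix.fromBlocks 1 (-(U * B)) 0 B with hM1'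
  have hM11' : M1 * M1' = 1 := by
    rw [hM1, hM1', Matrix.fromBlocks_multiply, ← Matrix.fromBlocks_one]
    simp [Matrix.mul_neg, ← Matrix.mul_assoc, h1]
  have hM1'1 : M1' * M1 = 1 := by
    rw [hM1, hM1', Matrix.fromBlocks_multiply, ← Matrix.fromBlocks_one]
    simp [Matrix.neg_mul, Matrix.mul_assoc, h2]
  set NN : Matrix ((Unit ⊕ ι) ⊕ Unit) ((Unit ⊕ ι) ⊕ Unit) S :=
    Matrix.fromBlocks M1 col 0 1 with hNN
  set NN' : Matrix ((Unit ⊕ ι) ⊕ Unit) ((Unit ⊕ ι) ⊕ Unit) S :=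
    Matrix.fromBlocks M1' (-(M1' * col)) 0 1 with hNN'
  have e1 : NN * NN' = 1 := by
    rw [hNN, hNN', Matrix.fromBlocks_multiply, ← Matrix.fromBlocks_one]
    simp [Matrix.mul_neg, ← Matrix.mul_assoc, hM11']
  have e2 : NN' * NN = 1 := by
    rw [hNN, hNN', Matrix.fromBlocks_multiply, ← Matrix.fromBlocks_one]
    simp [Matrix.neg_mul, hM1'1]
  have hval : NN' (Sum.inl (Sum.inl ())) (Sum.inr ()) =
      (∑ p, ∑ q, u p * B p q * v q) + a := by
    rw [hNN']
    simp [Matrix.mul_apply, Fintype.sum_sum_type, hM1', hcol, hU, Matrix.fromBlocks,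
      Matrix.one_apply, Finset.mul_sum, Finset.sum_mul, mul_assoc]
    rw [Finset.sum_comm]
  have hNNR : ∀ i j, NN i j ∈ R := by
    rintro (i | i) (j | j) <;>
      rcases i with i | i <;> try rcases j with j | j
    all_goals
      simp only [hNN, hM1, hcol, hU, Matrix.fromBlocks_apply₁₁, Matrix.fromBlocks_apply₁₂,
        Matrix.fromBlocks_apply₂₁, Matrix.fromBlocks_apply₂₂, Matrix.of_apply, Sum.elim_inl,
        Sum.elim_inr, Matrix.one_apply, Matrix.zero_apply]
    all_goals first
      | exact hu _ | exact hv _ | exact hA _ _ | exact R.neg_mem ha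
      | exact R.one_mem | exact R.zero_mem
      | (split
         · exact R.one_mem
         · exact R.zero_mem)
  rw [← hval]
  exact mem_Egen_of_fintype R hNNR e1 e2 _ _

lemma mem_Egen_of_mem (R : Subring S) {a : S} (ha : a ∈ R) : a ∈ Egen R := by
  have h := key_mem R (ι := Empty) (A := 1) (B := 1)
    (fun i _ => i.elim) (mul_one 1) (mul_one 1)
    (fun p => p.elim) (fun p => p.elim) (fun p => p.elim) (fun p => p.elim) ha
  simpa using h

lemma Egen_neg (R : Subring S) {s : S} (hs : s ∈ Egen R) : -s ∈ Egen R := by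
  obtain ⟨n, A, B, hA, h1, h2, i, j, rfl⟩ := hs
  refine ⟨n, -A, -B, fun i j => R.neg_mem (hA i j), ?_, ?_, i, j, by simp⟩
  · rw [neg_mul_neg, h1]
  · rw [neg_mul_neg, h2]

private lemma sum_delta₂ {ι : Type} [Fintype ι] [DecidableEq ι] (C : Matrix ι ι S)
    (i1 i2 j1 j2 : ι) :
    ∑ p, ∑ q, ((if p = i1 then (1:S) else 0) + (if p = i2 then 1 else 0)) * C p q *
        ((if q = j1 then 1 else 0) + (if q = j2 then 1 else 0)) =
      C i1 j1 + C i1 j2 + C i2 j1 + C i2 j2 := by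
  simp [add_mul, mul_add, Finset.sum_add_distrib, ite_mul, mul_ite,
    Finset.sum_ite_eq, Finset.sum_ite_eq']
  abel

lemma Egen_add (R : Subring S) {s t : S} (hs : s ∈ Egen R) (ht : t ∈ Egen R) :
    s + t ∈ Egen R := by
  classical
  obtain ⟨n, A, B, hA, hAB, hBA, i, j, rfl⟩ := hs
  obtain ⟨m, C, D, hC, hCD, hDC, k, l, rfl⟩ := ht
  set AA : Matrix (Fin n ⊕ Fin m) (Fin n ⊕ Fin m) S := Matrix.fromBlocks A 0 0 C with hAA
  set BB : Matrix (Fin n ⊕ Fin m) (Fin n ⊕ Fin m) S := Matrix.fromBlocks B 0 0 D with hBB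
  have e1 : AA * BB = 1 := by
    rw [hAA, hBB, Matrix.fromBlocks_multiply, ← Matrix.fromBlocks_one]
    simp [hAB, hCD]
  have e2 : BB * AA = 1 := by
    rw [hAA, hBB, Matrix.fromBlocks_multiply, ← Matrix.fromBlocks_one]
    simp [hBA, hDC]
  have hAAR : ∀ p q, AA p q ∈ R := by
    rintro (p | p) (q | q) <;>
      simp only [hAA, Matrix.fromBlocks_apply₁₁, Matrix.fromBlocks_apply₁₂,
        Matrix.fromBlocks_apply₂₁, Matrix.fromBlocks_apply₂₂, Matrix.zero_apply] <;>
      first | exact hA _ _ | exact hC _ _ | exact R.zero_mem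
  have hu : ∀ p : Fin n ⊕ Fin m,
      (if p = Sum.inl i then (1:S) else 0) + (if p = Sum.inr k then 1 else 0) ∈ R := by
    intro p
    refine R.add_mem ?_ ?_ <;>
      (split
       · exact R.one_mem
       · exact R.zero_mem)
  have hv : ∀ q : Fin n ⊕ Fin m,
      (if q = Sum.inl j then (1:S) else 0) + (if q = Sum.inr l then 1 else 0) ∈ R := by
    intro q
    refine R.add_mem ?_ ?_ <;>
      (split
       · exact R.one_mem
       · exact R.zero_mem)
  have h := key_mem R hAAR e1 e2
    (fun p => (if p = Sum.inl i then (1:S) else 0) + (if p = Sum.inr k then 1 else 0))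
    (fun q => (if q = Sum.inl j then (1:S) else 0) + (if q = Sum.inr l then 1 else 0))
    hu hv R.zero_mem
  rw [sum_delta₂] at h
  simpa [hBB] using h

lemma Egen_mul (R : Subring S) {s t : S} (hs : s ∈ Egen R) (ht : t ∈ Egen R) :
    s * t ∈ Egen R := by
  classical
  obtain ⟨n, A, B, hA, hAB, hBA, i, j, rfl⟩ := hs
  obtain ⟨m, C, D, hC, hCD, hDC, k, l, rfl⟩ := ht
  set X : Matrix (Fin n) (Fin m) S :=
    Matrix.of (fun p q => if p = j ∧ q = k then (-1 : S) else 0) with hX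
  set AA : Matrix (Fin n ⊕ Fin m) (Fin n ⊕ Fin m) S := Matrix.fromBlocks A X 0 C with hAA
  set BB : Matrix (Fin n ⊕ Fin m) (Fin n ⊕ Fin m) S :=
    Matrix.fromBlocks B (-(B * X * D)) 0 D with hBB
  have e1 : AA * BB = 1 := by
    rw [hAA, hBB, Matrix.fromBlocks_multiply, ← Matrix.fromBlocks_one, Matrix.fromBlocks_inj]
    refine ⟨by simp [hAB], ?_, by simp, by simp [hCD]⟩
    simp [Matrix.mul_neg, ← Matrix.mul_assoc, hAB]
  have e2 : BB * AA = 1 := by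
    rw [hAA, hBB, Matrix.fromBlocks_multiply, ← Matrix.fromBlocks_one, Matrix.fromBlocks_inj]
    refine ⟨by simp [hBA], ?_, by simp, by simp [hDC]⟩
    simp [Matrix.neg_mul, Matrix.mul_assoc, hDC]
  have hAAR : ∀ p q, AA p q ∈ R := by
    rintro (p | p) (q | q) <;>
      simp only [hAA, hX, Matrix.fromBlocks_apply₁₁, Matrix.fromBlocks_apply₁₂,
        Matrix.fromBlocks_apply₂₁, Matrix.fromBlocks_apply₂₂, Matrix.zero_apply,
        Matrix.of_apply]
    · exact hA _ _
    · split
      · exact R.neg_mem R.one_mem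
      · exact R.zero_mem
    · exact R.zero_mem
    · exact hC _ _
  have h := mem_Egen_of_fintype R hAAR e1 e2 (Sum.inl i) (Sum.inr l)
  have hval : BB (Sum.inl i) (Sum.inr l) = B i j * D k l := by
    rw [hBB]
    simp only [Matrix.fromBlocks_apply₁₂]
    simp [Matrix.mul_apply, hX, ite_and, mul_ite, ite_mul, Finset.sum_ite_eq,
      Finset.sum_ite_eq', Finset.mul_sum, Finset.sum_mul, mul_assoc]
  rwa [hval] at h

/-- Factorization `M = P D⁻¹ Q` with `P, D, Q` over `R`. -/
def Factors (R : Subring S) (n : ℕ) (M : Matrix (Fin n) (Fin n) S) : Prop :=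
  ∃ (ι : Type) (_ : Fintype ι) (_ : DecidableEq ι) (D D' : Matrix ι ι S)
    (P : Matrix (Fin n) ι S) (Q : Matrix ι (Fin n) S),
    (∀ i j, D i j ∈ R) ∧ (∀ i j, P i j ∈ R) ∧ (∀ i j, Q i j ∈ R) ∧
    D * D' = 1 ∧ D' * D = 1 ∧ P * D' * Q = M

lemma Factors_zero (R : Subring S) (n : ℕ) : Factors R n 0 := by
  refine ⟨Empty, inferInstance, inferInstance, 1, 1, 0, 0, by simp, by simp, by simp,
    by simp, by simp, by simp⟩

lemma Factors_add (R : Subring S) (n : ℕ) {M₁ M₂ : Matrix (Fin n) (Fin n) S}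
    (h₁ : Factors R n M₁) (h₂ : Factors R n M₂) : Factors R n (M₁ + M₂) := by
  obtain ⟨ι₁, _, _, D₁, D₁', P₁, Q₁, hD₁, hP₁, hQ₁, e₁, e₁', f₁⟩ := h₁
  obtain ⟨ι₂, _, _, D₂, D₂', P₂, Q₂, hD₂, hP₂, hQ₂, e₂, e₂', f₂⟩ := h₂
  refine ⟨ι₁ ⊕ ι₂, inferInstance, inferInstance,
    Matrix.fromBlocks D₁ 0 0 D₂, Matrix.fromBlocks D₁' 0 0 D₂',
    Matrix.fromCols P₁ P₂, Matrix.fromRows Q₁ Q₂, ?_, ?_, ?_, ?_, ?_, ?_⟩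
  · rintro (i | i) (j | j) <;>
      simp only [Matrix.fromBlocks_apply₁₁, Matrix.fromBlocks_apply₁₂,
        Matrix.fromBlocks_apply₂₁, Matrix.fromBlocks_apply₂₂, Matrix.zero_apply] <;>
      first | exact hD₁ _ _ | exact hD₂ _ _ | exact R.zero_mem
  · rintro i (j | j) <;> simp only [Matrix.fromCols] <;>
      first | exact hP₁ _ _ | exact hP₂ _ _
  · rintro (i | i) j <;> simp only [Matrix.fromRows] <;>
      first | exact hQ₁ _ _ | exact hQ₂ _ _
  · rw [Matrix.fromBlocks_multiply, ← Matrix.fromBlocks_one]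
    simp [e₁, e₂]
  · rw [Matrix.fromBlocks_multiply, ← Matrix.fromBlocks_one]
    simp [e₁', e₂']
  · rw [Matrix.fromCols_mul_fromBlocks, Matrix.fromCols_mul_fromRows]
    simp [f₁, f₂]

lemma Factors_single (R : Subring S) (n : ℕ) (p q : Fin n) {s : S} (hs : s ∈ Egen R) :
    Factors R n (Matrix.single p q s) := by
  obtain ⟨ν, A, B, hA, h1, h2, i, j, rfl⟩ := hs
  refine ⟨Fin ν, inferInstance, inferInstance, A, B,
    Matrix.of fun r x => if r = p ∧ x = i then (1 : S) else 0,
    Matrix.of fun x r => if x = j ∧ r = q then (1 : S) else 0,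
    hA, ?_, ?_, h1, h2, ?_⟩
  · intro r x; dsimp only [Matrix.of_apply]
    split
    · exact R.one_mem
    · exact R.zero_mem
  · intro x r; dsimp only [Matrix.of_apply]
    split
    · exact R.one_mem
    · exact R.zero_mem
  · ext r r'
    simp [Matrix.mul_apply, Matrix.single, ite_and, mul_ite, ite_mul,
      Finset.sum_ite_eq, Finset.sum_ite_eq', eq_comm]
    split <;> split <;> simp_all

lemma factors_of_entries (R : Subring S) (n : ℕ) (M : Matrix (Fin n) (Fin n) S)
    (hM : ∀ p q, M p q ∈ Egen R) : Factors R n M := by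
  rw [Matrix.matrix_eq_sum_single M]
  refine Finset.sum_induction _ _ (fun a b ha hb => Factors_add R n ha hb)
    (Factors_zero R n) (fun p _ => ?_)
  refine Finset.sum_induction _ _ (fun a b ha hb => Factors_add R n ha hb)
    (Factors_zero R n) (fun q _ => Factors_single R n p q (hM p q))

lemma neg_inv_entry_mem (R : Subring S) (n : ℕ) (M N : Matrix (Fin n) (Fin n) S)
    (hM : ∀ p q, M p q ∈ Egen R) (hMN : M * N = 1) (hNM : N * M = 1) (p q : Fin n) :
    -(N p q) ∈ Egen R := by
  obtain ⟨ι, _, _, D, D', P, Q, hD, hP, hQ, hDD', hD'D, hPQ⟩ :=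
    factors_of_entries R n M hM
  have hPQ' : P * (D' * Q) = M := by rw [← Matrix.mul_assoc, hPQ]
  set Z : Matrix (ι ⊕ Fin n) (ι ⊕ Fin n) S := Matrix.fromBlocks D Q P 0 with hZ
  set Z' : Matrix (ι ⊕ Fin n) (ι ⊕ Fin n) S :=
    Matrix.fromBlocks (D' - D' * Q * N * P * D') (D' * Q * N) (N * P * D') (-N) with hZ'
  have b11 : D * (D' - D' * Q * N * P * D') + Q * (N * P * D') = 1 := by
    simp [Matrix.mul_sub, ← Matrix.mul_assoc, hDD']
  have b12 : D * (D' * Q * N) + Q * (-N) = 0 := by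
    simp [Matrix.mul_neg, ← Matrix.mul_assoc, hDD']
  have b21 : P * (D' - D' * Q * N * P * D') + (0 : Matrix (Fin n) (Fin n) S) * (N * P * D') = 0 := by
    simp [Matrix.mul_sub, ← Matrix.mul_assoc, hPQ, hMN]
  have b22 : P * (D' * Q * N) + (0 : Matrix (Fin n) (Fin n) S) * (-N) = 1 := by
    simp [← Matrix.mul_assoc, hPQ, hMN]
  have e1 : Z * Z' = 1 := by
    rw [hZ, hZ', Matrix.fromBlocks_multiply, b11, b12, b21, b22, Matrix.fromBlocks_one]
  have c11 : (D' - D' * Q * N * P * D') * D + (D' * Q * N) * P = 1 := by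
    simp [Matrix.sub_mul, Matrix.mul_assoc, hD'D]
  have c12 : (D' - D' * Q * N * P * D') * Q + (D' * Q * N) * (0 : Matrix (Fin n) (Fin n) S) = 0 := by
    simp [Matrix.sub_mul, Matrix.mul_assoc, hPQ', hNM]
  have c21 : (N * P * D') * D + (-N) * P = 0 := by
    simp [Matrix.mul_assoc, hD'D, Matrix.neg_mul]
  have c22 : (N * P * D') * Q + (-N) * (0 : Matrix (Fin n) (Fin n) S) = 1 := by
    simp [Matrix.mul_assoc, hPQ', hNM]
  have e2 : Z' * Z = 1 := by
    rw [hZ, hZ', Matrix.fromBlocks_multiply, c11, c12, c21, c22, Matrix.fromBlocks_one]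
  have hZR : ∀ i j, Z i j ∈ R := by
    rintro (i | i) (j | j) <;>
      simp only [hZ, Matrix.fromBlocks_apply₁₁, Matrix.fromBlocks_apply₁₂,
        Matrix.fromBlocks_apply₂₁, Matrix.fromBlocks_apply₂₂, Matrix.zero_apply] <;>
      first | exact hD _ _ | exact hQ _ _ | exact hP _ _ | exact R.zero_mem
  have := mem_Egen_of_fintype R hZR e1 e2 (Sum.inr p) (Sum.inr q)
  simpa [hZ'] using this

/-- The rational closure as a subring. -/
def ratT (R : Subring S) : Subring S where
  carrier := Egen R
  zero_mem' := mem_Egen_of_mem R R.zero_mem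
  one_mem' := mem_Egen_of_mem R R.one_mem
  add_mem' := Egen_add R
  mul_mem' := Egen_mul R
  neg_mem' := Egen_neg R

end Aux

/-- A subring `T` of `S` is rationally closed if for every square matrix over `T` which is
invertible over `S`, all entries of the inverse matrix lie in `T`. -/
def RationallyClosed {S : Type} [Ring S] (T : Subring S) : Prop :=
  ∀ (n : ℕ) (A B : Matrix (Fin n) (Fin n) S),
    (∀ i j, A i j ∈ T) → A * B = 1 → B * A = 1 → ∀ i j, B i j ∈ T

/-- For a subring `R` of a ring `S`, the set of entries of inverses of matrices over `R`
invertible over `S`, together with `R`, forms the rational closure: it is a rationally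
closed subring of `S` containing `R`, and it is the smallest such. -/
theorem rational_closure_description (S : Type) [Ring S] (R : Subring S) :
    ∃ T : Subring S,
      (T : Set S) = (R : Set S) ∪
        {s : S | ∃ (n : ℕ) (A B : Matrix (Fin n) (Fin n) S),
          (∀ i j, A i j ∈ R) ∧ A * B = 1 ∧ B * A = 1 ∧ ∃ i j, B i j = s} ∧
      RationallyClosed T ∧ R ≤ T ∧
      ∀ T' : Subring S, RationallyClosed T' → R ≤ T' → T ≤ T' := by
  refine ⟨ratT R, ?_, ?_, ?_, ?_⟩
  · show (Egen R : Set S) = (R : Set S) ∪ Egen R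
    exact (Set.union_eq_self_of_subset_left (fun a ha => mem_Egen_of_mem R ha)).symm
  · intro n A B hA h1 h2 i j
    have h := neg_inv_entry_mem R n A B hA h1 h2 i j
    have := (ratT R).neg_mem h
    simpa using this
  · exact fun a ha => mem_Egen_of_mem R ha
  · rintro T' hT' hRT' s ⟨n, A, B, hA, h1, h2, i, j, rfl⟩
    exact hT' n A B (fun i j => hRT' (hA i j)) h1 h2 i j
end

section
/- A von Neumann regular ring with no infinite strictly ascending chain of principal right ideals admitting a faithful projective rank function with values in (1/l)·Z is semisimple. More precisely: if R is von Neumann regular and ρ : K_0(R) → R is a faithful projective rank function taking values in (1/l)Z for some positive integer l, then R is semisimple. -/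
open Submodule

section Aux
variable {R : Type} [Ring R]

/-- If `x ∈ Re` with `e` idempotent, then `x * e = x`. -/
lemma aux_mul_right_of_mem {e x : R} (he : IsIdempotentElem e)
    (hx : x ∈ span R {e}) : x * e = x := by
  obtain ⟨r, rfl⟩ := mem_span_singleton.mp hx
  simp only [smul_eq_mul, mul_assoc, he.eq]

/-- In a von Neumann regular ring, every principal left ideal is generated by an idempotent. -/
lemma aux_principal_idem (hreg : ∀ x : R, ∃ y : R, x * y * x = x) (x : R) :
    ∃ e : R, IsIdempotentElem e ∧ span R {x} = span R {e} := by
  obtain ⟨y, hy⟩ := hreg x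
  refine ⟨y * x, ?_, le_antisymm ?_ ?_⟩
  · show y * x * (y * x) = y * x
    calc y * x * (y * x) = y * (x * y * x) := by rw [mul_assoc, ← mul_assoc x y x]
    _ = y * x := by rw [hy]
  · rw [span_le, Set.singleton_subset_iff, SetLike.mem_coe, mem_span_singleton]
    exact ⟨x, by rw [smul_eq_mul, ← mul_assoc, hy]⟩
  · rw [span_le, Set.singleton_subset_iff, SetLike.mem_coe, mem_span_singleton]
    exact ⟨y, by rw [smul_eq_mul]⟩

/-- The sum of two idempotent-generated left ideals is idempotent-generated. -/
lemma aux_sup_idem (hreg : ∀ x : R, ∃ y : R, x * y * x = x) {e f : R}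
    (he : IsIdempotentElem e) (hf : IsIdempotentElem f) :
    ∃ h : R, IsIdempotentElem h ∧ span R {e} ⊔ span R {f} = span R {h} := by
  set c : R := f - f * e with hc
  have hce : c * e = 0 := by
    simp only [hc, sub_mul, mul_assoc, he.eq, sub_self]
  obtain ⟨g, hg, hcg⟩ := aux_principal_idem hreg c
  have hge : g * e = 0 := by
    have : g ∈ span R {c} := hcg ▸ mem_span_singleton_self g
    obtain ⟨r, rfl⟩ := mem_span_singleton.mp this
    simp only [smul_eq_mul, mul_assoc, hce, mul_zero]
  refine ⟨e + g - e * g, ?_, ?_⟩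
  · have hge' : ∀ x : R, g * (e * x) = 0 := fun x => by rw [← mul_assoc, hge, zero_mul]
    have he' : ∀ x : R, e * (e * x) = e * x := fun x => by rw [← mul_assoc, he.eq]
    have hg' : ∀ x : R, g * (g * x) = g * x := fun x => by rw [← mul_assoc, hg.eq]
    show (e + g - e * g) * (e + g - e * g) = e + g - e * g
    simp only [mul_sub, sub_mul, mul_add, add_mul, mul_assoc, he.eq, hg.eq, hge, hge', he', hg',
      mul_zero, zero_mul, sub_zero, add_zero, zero_add]
    abel
  · have heh : e ∈ span R {e + g - e * g} := by
      rw [mem_span_singleton]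
      refine ⟨e, ?_⟩
      simp only [smul_eq_mul, mul_sub, mul_add, ← mul_assoc, he.eq]
      abel
    have hgh : g ∈ span R {e + g - e * g} := by
      rw [mem_span_singleton]
      refine ⟨g, ?_⟩
      simp only [smul_eq_mul, mul_sub, mul_add, ← mul_assoc, hge, hg.eq, zero_mul, mul_zero]
      abel
    refine le_antisymm (sup_le ?_ ?_) ?_
    · rw [span_le, Set.singleton_subset_iff]; exact heh
    · rw [span_le, Set.singleton_subset_iff, SetLike.mem_coe]
      -- f = c + f*e,  c ∈ span{g} ⊆ span{h},  f*e ∈ span{e} ⊆ span{h}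
      have hcmem : c ∈ span R {e + g - e * g} := by
        have : c ∈ span R {g} := hcg ▸ mem_span_singleton_self c
        obtain ⟨r, hr⟩ := mem_span_singleton.mp this
        rw [← hr]
        exact Submodule.smul_mem _ r hgh
      have hfe : f * e ∈ span R {e + g - e * g} := by
        have := Submodule.smul_mem (span R {e + g - e * g}) f heh
        rwa [smul_eq_mul] at this
      have : f = c + f * e := by rw [hc]; abel
      rw [this]
      exact add_mem hcmem hfe
    · rw [span_le, Set.singleton_subset_iff, SetLike.mem_coe]
      have h1 : e ∈ span R {e} ⊔ span R {f} := mem_sup_left (mem_span_singleton_self e)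
      have h2 : c ∈ span R {e} ⊔ span R {f} := by
        refine sub_mem (mem_sup_right (mem_span_singleton_self f)) ?_
        exact mem_sup_left (mem_span_singleton.mpr ⟨f, rfl⟩)
      have h3 : g ∈ span R {e} ⊔ span R {f} := by
        have : g ∈ span R {c} := hcg ▸ mem_span_singleton_self g
        obtain ⟨r, hr⟩ := mem_span_singleton.mp this
        rw [← hr]
        exact Submodule.smul_mem _ r h2
      have h4 : e * g ∈ span R {e} ⊔ span R {f} := by
        have := Submodule.smul_mem (span R {e} ⊔ span R {f}) e h3
        rwa [smul_eq_mul] at this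
      exact sub_mem (add_mem h1 h3) h4

/-- An idempotent-generated left ideal is a projective module. -/
lemma aux_proj {e : R} (he : IsIdempotentElem e) :
    Module.Projective R ↥(span R {e}) := by
  refine Module.Projective.of_split (span R {e}).subtype
    (LinearMap.codRestrict _ (LinearMap.toSpanSingleton R R e)
      (fun r => mem_span_singleton.mpr ⟨r, rfl⟩)) ?_
  apply LinearMap.ext
  rintro ⟨x, hx⟩
  refine Subtype.ext ?_
  simpa [smul_eq_mul] using aux_mul_right_of_mem he hx

lemma aux_fin {e : R} : Module.Finite R ↥(span R {e}) :=
  Module.Finite.iff_fg.mpr (Submodule.fg_span_singleton e)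

/-- Decomposition `Rh ≅ Re × Rg` when `Re ≤ Rh`, with `g` idempotent. -/
lemma aux_decomp (hreg : ∀ x : R, ∃ y : R, x * y * x = x) {e h : R}
    (he : IsIdempotentElem e) (hh : IsIdempotentElem h)
    (hle : span R {e} ≤ span R {h}) :
    ∃ g : R, IsIdempotentElem g ∧ span R {e} ⊔ span R {g} = span R {h} ∧
      Nonempty ((↥(span R {h})) ≃ₗ[R] (↥(span R {e}) × ↥(span R {g}))) := by
  set c : R := h - h * e with hc
  have hce : c * e = 0 := by
    simp only [hc, sub_mul, mul_assoc, he.eq, sub_self]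
  have hcJ : c ∈ span R {h} := by
    refine sub_mem (mem_span_singleton_self h) (hle ?_)
    exact mem_span_singleton.mpr ⟨h, rfl⟩
  obtain ⟨g, hg, hcg⟩ := aux_principal_idem hreg c
  -- facts about span{g} = span{c}
  have hCJ : span R {g} ≤ span R {h} := by
    rw [← hcg, span_le, Set.singleton_subset_iff]; exact hcJ
  have hCe : ∀ x ∈ span R {g}, x * e = 0 := by
    intro x hx
    rw [← hcg] at hx
    obtain ⟨r, rfl⟩ := mem_span_singleton.mp hx
    simp only [smul_eq_mul, mul_assoc, hce, mul_zero]
  have hsub : ∀ x ∈ span R {h}, x - x * e ∈ span R {g} := by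
    intro x hx
    rw [← hcg, mem_span_singleton]
    refine ⟨x, ?_⟩
    rw [smul_eq_mul, hc, mul_sub, ← mul_assoc, aux_mul_right_of_mem hh hx]
  have hmule : ∀ x : R, x * e ∈ span R {e} := fun x => mem_span_singleton.mpr ⟨x, rfl⟩
  have hsup : span R {e} ⊔ span R {g} = span R {h} := by
    refine le_antisymm (sup_le hle hCJ) ?_
    rw [span_le, Set.singleton_subset_iff, SetLike.mem_coe]
    have : h = h * e + (h - h * e) := by abel
    rw [this]
    exact add_mem (mem_sup_left (hmule h)) (mem_sup_right (hsub h (mem_span_singleton_self h)))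
  refine ⟨g, hg, hsup, ⟨?_⟩⟩
  -- build the equivalence
  refine LinearEquiv.ofLinear
    (LinearMap.prod
      (LinearMap.codRestrict _ ((LinearMap.toSpanSingleton R R e).comp (span R {h}).subtype)
        (fun x => hmule x))
      (LinearMap.codRestrict _ ((LinearMap.id - LinearMap.toSpanSingleton R R e).comp
          (span R {h}).subtype)
        (fun x => by simpa [smul_eq_mul] using hsub x x.2)))
    (LinearMap.codRestrict _
      ((span R {e}).subtype.comp (LinearMap.fst R _ _)
        + (span R {g}).subtype.comp (LinearMap.snd R _ _))
      (fun p => by exact add_mem (hle p.1.2) (hCJ p.2.2))) ?_ ?_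
  · apply LinearMap.ext
    rintro ⟨⟨a, ha⟩, ⟨b, hb⟩⟩
    have hae : a * e = a := aux_mul_right_of_mem he ha
    have hbe : b * e = 0 := hCe b hb
    refine Prod.ext (Subtype.ext ?_) (Subtype.ext ?_) <;>
      (erw [LinearMap.codRestrict_apply]; simp [smul_eq_mul, add_mul, hae, hbe]) <;> abel
  · apply LinearMap.ext
    rintro ⟨x, hx⟩
    refine Subtype.ext ?_
    simp [smul_eq_mul]
    change x * e + (x - x * e) = x
    abel
end Aux
/-- A von Neumann regular ring admitting a faithful projective rank function with values
in `(1/l)·ℤ` is semisimple. The rank function `ρ` is defined on all modules, is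
isomorphism-invariant and additive on finitely generated projectives, is normalized by
`ρ(R) = 1`, nonnegative and faithful on finitely generated projectives, and takes values
in `(1/l)ℤ`. -/
theorem semisimple_of_vonNeumannRegular_of_rank_function (R : Type) [Ring R]
    (hreg : ∀ x : R, ∃ y : R, x * y * x = x)
    (l : ℕ) (hl : 0 < l)
    (ρ : ∀ (M : Type) [AddCommGroup M] [Module R M], ℝ)
    (hone : ρ R = 1)
    (hiso : ∀ (M N : Type) [AddCommGroup M] [Module R M] [AddCommGroup N] [Module R N],
      (M ≃ₗ[R] N) → ρ M = ρ N)
    (hadd : ∀ (M N : Type) [AddCommGroup M] [Module R M] [AddCommGroup N] [Module R N],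
      Module.Finite R M → Module.Projective R M →
      Module.Finite R N → Module.Projective R N → ρ (M × N) = ρ M + ρ N)
    (hnonneg : ∀ (M : Type) [AddCommGroup M] [Module R M],
      Module.Finite R M → Module.Projective R M → 0 ≤ ρ M)
    (hfaithful : ∀ (M : Type) [AddCommGroup M] [Module R M],
      Module.Finite R M → Module.Projective R M → ρ M = 0 → Subsingleton M)
    (hval : ∀ (M : Type) [AddCommGroup M] [Module R M],
      Module.Finite R M → Module.Projective R M → ∃ k : ℤ, ρ M = (k : ℝ) / (l : ℝ)) :
    IsSemisimpleRing R := by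
  have hlR : (0 : ℝ) < (l : ℝ) := by exact_mod_cast hl
  -- additivity along an inclusion of idempotent-generated ideals
  have hρadd : ∀ e h : R, IsIdempotentElem e → IsIdempotentElem h →
      span R {e} ≤ span R {h} → ∃ g : R, IsIdempotentElem g ∧
        span R {e} ⊔ span R {g} = span R {h} ∧
        ρ ↥(span R {h}) = ρ ↥(span R {e}) + ρ ↥(span R {g}) := by
    intro e h he hh hle
    obtain ⟨g, hg, hsup, ⟨eqv⟩⟩ := aux_decomp hreg he hh hle
    refine ⟨g, hg, hsup, ?_⟩
    rw [hiso _ _ eqv]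
    exact hadd _ _ aux_fin (aux_proj he) aux_fin (aux_proj hg)
  have hmono : ∀ e h : R, IsIdempotentElem e → IsIdempotentElem h →
      span R {e} ≤ span R {h} → ρ ↥(span R {e}) ≤ ρ ↥(span R {h}) := by
    intro e h he hh hle
    obtain ⟨g, hg, -, hadd'⟩ := hρadd e h he hh hle
    have := hnonneg ↥(span R {g}) aux_fin (aux_proj hg)
    linarith
  have htop : ρ ↥(span R {(1 : R)}) = 1 := by
    have h1 : span R {(1 : R)} = ⊤ := by
      rw [eq_top_iff]
      intro x _
      exact Submodule.mem_span_singleton.mpr ⟨x, by rw [smul_eq_mul, mul_one]⟩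
    rw [hiso _ R (LinearEquiv.ofTop _ h1), hone]
  have hone_idem : IsIdempotentElem (1 : R) := by simp [IsIdempotentElem]
  have hbound : ∀ e : R, IsIdempotentElem e → ρ ↥(span R {e}) ≤ 1 := by
    intro e he
    rw [← htop]
    have htop1 : span R {(1 : R)} = ⊤ := by
      rw [eq_top_iff]
      intro x _
      exact Submodule.mem_span_singleton.mpr ⟨x, by rw [smul_eq_mul, mul_one]⟩
    exact hmono e 1 he hone_idem (le_of_le_of_eq le_top htop1.symm)
  -- rank values are k/l with 0 ≤ k ≤ l, k : ℕ
  have hnat : ∀ e : R, IsIdempotentElem e →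
      ∃ k : ℕ, k ≤ l ∧ ρ ↥(span R {e}) = (k : ℝ) / (l : ℝ) := by
    intro e he
    obtain ⟨k, hk⟩ := hval ↥(span R {e}) aux_fin (aux_proj he)
    have h0 : (0 : ℝ) ≤ (k : ℝ) / (l : ℝ) := hk ▸ hnonneg _ aux_fin (aux_proj he)
    have h1 : (k : ℝ) / (l : ℝ) ≤ 1 := hk ▸ hbound e he
    have hk0 : (0 : ℝ) ≤ (k : ℝ) := by
      by_contra hc
      push_neg at hc
      nlinarith [div_neg_of_neg_of_pos hc hlR]
    have hkl : (k : ℝ) ≤ (l : ℝ) := by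
      rw [div_le_one hlR] at h1
      exact h1
    have hk0' : 0 ≤ k := by exact_mod_cast hk0
    have hkl' : k ≤ (l : ℤ) := by exact_mod_cast hkl
    refine ⟨k.toNat, by omega, ?_⟩
    rw [hk]
    congr 1
    exact_mod_cast (Int.toNat_of_nonneg hk0').symm
  -- strict growth adds at least 1/l
  have hstrict : ∀ e h : R, IsIdempotentElem e → IsIdempotentElem h →
      span R {e} ≤ span R {h} → span R {e} ≠ span R {h} →
      ρ ↥(span R {e}) + 1 / (l : ℝ) ≤ ρ ↥(span R {h}) := by
    intro e h he hh hle hne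
    obtain ⟨g, hg, hsup, hadd'⟩ := hρadd e h he hh hle
    obtain ⟨k, -, hk⟩ := hnat g hg
    have hkpos : 1 ≤ k := by
      rcases Nat.eq_zero_or_pos k with h0 | h1
      · exfalso
        apply hne
        have hρg : ρ ↥(span R {g}) = 0 := by rw [hk, h0]; simp
        have hsg : Subsingleton ↥(span R {g}) :=
          hfaithful _ aux_fin (aux_proj hg) hρg
        have hbot : span R {g} = ⊥ := (Submodule.subsingleton_iff_eq_bot).mp hsg
        rw [← hsup, hbot, sup_bot_eq]
      · exact h1
    have : 1 / (l : ℝ) ≤ (k : ℝ) / (l : ℝ) := by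
      gcongr
      exact_mod_cast hkpos
    rw [hadd', hk]
    linarith
  -- main argument: every submodule of R is generated by an idempotent
  refine { exists_isCompl := ?_ }
  intro N
  set V : Set ℕ := {k : ℕ | k ≤ l ∧ ∃ e : R, IsIdempotentElem e ∧ span R {e} ≤ N ∧
    ρ ↥(span R {e}) = (k : ℝ) / (l : ℝ)} with hV
  have hzero_idem : IsIdempotentElem (0 : R) := by simp [IsIdempotentElem]
  have hVne : V.Nonempty := by
    obtain ⟨k, hkl, hk⟩ := hnat 0 hzero_idem
    refine ⟨k, hkl, 0, hzero_idem, ?_, hk⟩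
    rw [Submodule.span_zero_singleton]
    exact bot_le
  have hVbdd : BddAbove V := ⟨l, fun k hk => hk.1⟩
  obtain ⟨hml, e, he, heN, hρe⟩ := Nat.sSup_mem hVne hVbdd
  have hNe : N = span R {e} := by
    refine le_antisymm ?_ heN
    by_contra hc
    obtain ⟨x, hxN, hxe⟩ := SetLike.not_le_iff_exists.mp hc
    clear hc
    obtain ⟨f, hf, hxf⟩ := aux_principal_idem hreg x
    obtain ⟨h, hhidem, hsup⟩ := aux_sup_idem hreg he hf
    have hhN : span R {h} ≤ N := by
      rw [← hsup]
      refine sup_le heN ?_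
      rw [← hxf, Submodule.span_le, Set.singleton_subset_iff]
      exact hxN
    have hle : span R {e} ≤ span R {h} := hsup ▸ le_sup_left
    have hne : span R {e} ≠ span R {h} := by
      intro hEq
      apply hxe
      rw [hEq, ← hsup]
      exact Submodule.mem_sup_right (hxf ▸ Submodule.mem_span_singleton_self x)
    obtain ⟨k', hk'l, hk'⟩ := hnat h hhidem
    have hk'V : k' ∈ V := ⟨hk'l, h, hhidem, hhN, hk'⟩
    have hk'le : k' ≤ sSup V := le_csSup hVbdd hk'V
    have := hstrict e h he hhidem hle hne
    rw [hρe, hk'] at this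
    have hgrow : ((sSup V : ℕ) : ℝ) + 1 ≤ (k' : ℝ) := by
      rw [← add_div, div_le_div_iff_of_pos_right hlR] at this
      linarith
    have : (sSup V) + 1 ≤ k' := by exact_mod_cast hgrow
    omega
  refine ⟨LinearMap.ker (LinearMap.toSpanSingleton R R e), ?_⟩
  rw [hNe]
  constructor
  · rw [Submodule.disjoint_def]
    intro x hx hx'
    have h1 : x * e = x := aux_mul_right_of_mem he hx
    have h2 : x • e = 0 := hx'
    rw [smul_eq_mul] at h2
    rw [← h1, h2]
  · rw [codisjoint_iff, eq_top_iff]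
    intro x _
    refine Submodule.mem_sup.mpr ⟨x * e, Submodule.mem_span_singleton.mpr ⟨x, rfl⟩,
      x - x * e, ?_, by abel⟩
    show (x - x * e) • e = 0
    rw [smul_eq_mul, sub_mul, mul_assoc, he.eq, sub_self]
end
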